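/- arXiv:2105.02796 — 2 statements merged into one kernel-verified Lean document; each statement's English description precedes it below -/
import Mathlib

section
/- Let N be a positive integer, let K and K̃ be N×N real symmetric positive semidefinite matrices whose entries satisfy |K̃ᵢⱼ − Kᵢⱼ| ≤ ε̃ for all indices i, j, where ε̃ ≥ 0, and let λ > 0. Then log det(K̃ + λI) ≤ log det(K + (N·ε̃ + λ)·I). -/
/-!
The entrywise bound gives `|vᵀ(K - K̃)v| ≤ ε (∑ᵢ |vᵢ|)² ≤ N ε ‖v‖²` by Cauchy–Schwarz, so
`C = N ε I + (K - K̃)` is positive semidefinite and `K + (N ε + λ) I = (K̃ + λ I) + C`.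
The determinant is monotone on positive definite matrices: writing `A = S²` with `S = √A`,
`det (A + C) = det A · det (1 + S⁻¹ C S⁻¹)`, and every eigenvalue of `1 + S⁻¹ C S⁻¹` is at least `1`.
-/

open Matrix MeasureTheory

/-- Operator norm of an `N × N` real matrix induced by the Euclidean norm on `ℝ^N`. -/
noncomputable def opNorm {N : ℕ} (M : Matrix (Fin N) (Fin N) ℝ) : ℝ :=
  ‖Matrix.toEuclideanCLM (𝕜 := ℝ) M‖

/-- Euclidean norm of a vector in `ℝ^N`. -/
noncomputable def evnorm {N : ℕ} (v : Fin N → ℝ) : ℝ :=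
  Real.sqrt (∑ i, (v i) ^ 2)

namespace Matrix

open scoped Pointwise

variable {n : Type*} [Fintype n]

lemma abs_dotProduct_mulVec_le_of_abs_le {m : Type*} [Fintype m] {D : Matrix m n ℝ} {ε : ℝ}
    (hD : ∀ i j, |D i j| ≤ ε) (v : m → ℝ) (w : n → ℝ) :
    |v ⬝ᵥ D *ᵥ w| ≤ ε * ((∑ i, |v i|) * ∑ j, |w j|) :=
  calc |v ⬝ᵥ D *ᵥ w| = |∑ i, ∑ j, v i * D i j * w j| := by
        simp [dotProduct, mulVec, Finset.mul_sum, mul_assoc]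
    _ ≤ ∑ i, ∑ j, |v i * D i j * w j| := (Finset.abs_sum_le_sum_abs _ _).trans
        (Finset.sum_le_sum fun i _ => Finset.abs_sum_le_sum_abs _ _)
    _ ≤ ∑ i, ∑ j, ε * (|v i| * |w j|) := by
        gcongr with i _ j _
        rw [abs_mul, abs_mul, mul_comm |v i|, mul_assoc]
        gcongr
        exact hD i j
    _ = ε * ((∑ i, |v i|) * ∑ j, |w j|) := by
        simp_rw [Finset.sum_mul_sum, Finset.mul_sum]

lemma posSemidef_of_isSymm {M : Matrix n n ℝ} (hM : M.IsSymm)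
    (h : ∀ v : n → ℝ, 0 ≤ v ⬝ᵥ M *ᵥ v) : M.PosSemidef :=
  .of_dotProduct_mulVec_nonneg (isHermitian_iff_isSymm.mpr hM) h

variable [DecidableEq n]

lemma posSemidef_card_mul_smul_one_add {D : Matrix n n ℝ} {ε : ℝ} (hD : D.IsSymm) (hε : 0 ≤ ε)
    (h : ∀ i j, |D i j| ≤ ε) : ((Fintype.card n * ε) • 1 + D).PosSemidef := by
  refine posSemidef_of_isSymm ((isSymm_one.smul _).add hD) fun v => ?_
  have hCS : (∑ i, |v i|) ^ 2 ≤ Fintype.card n * (v ⬝ᵥ v) := by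
    simpa [dotProduct, ← sq] using
      sq_sum_le_card_mul_sum_sq (s := Finset.univ) (f := fun i => |v i|)
  have hquad := neg_le_of_abs_le (abs_dotProduct_mulVec_le_of_abs_le h v v)
  have hscale := mul_le_mul_of_nonneg_left hCS hε
  rw [add_mulVec, dotProduct_add, smul_mulVec, one_mulVec, dotProduct_smul, smul_eq_mul]
  linarith

lemma PosSemidef.one_le_det_one_add {M : Matrix n n ℝ} (hM : M.PosSemidef) :
    1 ≤ (1 + M).det := by
  have hH : (1 + M).IsHermitian := isHermitian_one.add hM.1
  have hspec : spectrum ℝ (1 + M) = ({1} : Set ℝ) + spectrum ℝ M := by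
    rw [spectrum.singleton_add_eq, map_one]
  rw [hH.det_eq_prod_eigenvalues]
  refine Finset.one_le_prod fun i _ => ?_
  obtain ⟨_, rfl, μ, hμ, hi⟩ := hspec ▸ hH.eigenvalues_mem_spectrum_real i
  have hμ_nonneg : 0 ≤ μ := (posSemidef_iff_isHermitian_and_spectrum_nonneg.mp hM).2 hμ
  simp only [RCLike.ofReal_real_eq_id, id_eq, ← hi]
  linarith

open scoped MatrixOrder in
lemma PosDef.det_le_det_add {A C : Matrix n n ℝ} (hA : A.PosDef) (hC : C.PosSemidef) :
    A.det ≤ (A + C).det := by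
  set S := CFC.sqrt A
  have hSS : S * S = A := CFC.sqrt_mul_sqrt_self A hA.posSemidef.nonneg
  have hSH : Sᴴ = S := (CFC.sqrt_nonneg A).posSemidef.1
  have hS : IsUnit S.det :=
    isUnit_of_mul_isUnit_left (by rw [← det_mul, hSS]; exact hA.det_pos.ne'.isUnit)
  have hM : (S⁻¹ * C * S⁻¹).PosSemidef := by
    have := hC.conjTranspose_mul_mul_same S⁻¹
    rwa [conjTranspose_nonsing_inv, hSH] at this
  have hfact : A + C = S * (1 + S⁻¹ * C * S⁻¹) * S := by
    simp only [mul_add, add_mul, mul_one, hSS, ← Matrix.mul_assoc, mul_nonsing_inv _ hS, one_mul]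
    simp only [Matrix.mul_assoc, nonsing_inv_mul _ hS, mul_one]
  calc A.det ≤ A.det * (1 + S⁻¹ * C * S⁻¹).det :=
        le_mul_of_one_le_right hA.det_pos.le hM.one_le_det_one_add
    _ = (A + C).det := by rw [hfact, det_mul, det_mul, ← hSS, det_mul]; ring

end Matrix

theorem stmt_5_general {N : ℕ} (K Kt : Matrix (Fin N) (Fin N) ℝ)
    (hKsymm : K.IsSymm) (hKtsymm : Kt.IsSymm)
    (hKtpsd : ∀ v : Fin N → ℝ, 0 ≤ v ⬝ᵥ Kt *ᵥ v)
    (ε : ℝ) (hε : 0 ≤ ε) (hentry : ∀ i j, |Kt i j - K i j| ≤ ε)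
    (lam : ℝ) (hlam : 0 < lam) :
    Real.log (Kt + lam • 1).det ≤ Real.log (K + (N * ε + lam) • 1).det := by
  have hA : (Kt + lam • 1).PosDef :=
    PosDef.posSemidef_add (posSemidef_of_isSymm hKtsymm hKtpsd)
      (by simpa [smul_one_eq_diagonal] using PosDef.diagonal fun _ => hlam)
  have hC : ((N * ε) • 1 + (K - Kt)).PosSemidef := by
    simpa using posSemidef_card_mul_smul_one_add (hKsymm.sub hKtsymm) hε
      fun i j => by rw [Matrix.sub_apply, abs_sub_comm]; exact hentry i j
  have hsplit : K + (N * ε + lam) • 1 = (Kt + lam • 1) + ((N * ε) • 1 + (K - Kt)) := by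
    rw [add_smul]; abel
  rw [hsplit]
  exact Real.log_le_log hA.det_pos (hA.det_le_det_add hC)

theorem stmt_5 {N : ℕ} (hN : 0 < N) (K Kt : Matrix (Fin N) (Fin N) ℝ)
    (hKsymm : K.IsSymm) (hKtsymm : Kt.IsSymm)
    (hKpsd : ∀ v : Fin N → ℝ, 0 ≤ v ⬝ᵥ K *ᵥ v)
    (hKtpsd : ∀ v : Fin N → ℝ, 0 ≤ v ⬝ᵥ Kt *ᵥ v)
    (ε : ℝ) (hε : 0 ≤ ε) (hentry : ∀ i j, |Kt i j - K i j| ≤ ε)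
    (lam : ℝ) (hlam : 0 < lam) :
    Real.log (Kt + lam • 1).det ≤ Real.log (K + (N * ε + lam) • 1).det :=
  stmt_5_general K Kt hKsymm hKtsymm hKtpsd ε hε hentry lam hlam
end

section
/- Let N be a positive integer, let K and K̃ be N×N real symmetric positive semidefinite matrices, let λ > 0, let ε̃ ≥ 0, let k, k̃ ∈ ℝ^N be vectors satisfying |k̃ᵢ − kᵢ| ≤ ε̃ for every index i, and let c, c̃ ∈ ℝ satisfy |c − c̃| ≤ ε̃. Define the posterior variances σ² := c − kᵀ(K + λI)⁻¹ k and σ̃² := c̃ − k̃ᵀ(K̃ + λI)⁻¹ k̃. Then |σ² − σ̃²| ≤ S², where S² := ε̃ + √N·ε̃·‖(K + λI)⁻¹ k‖ + (√N·ε̃ + ‖k‖)·C and C := (1/λ + ‖(K + λI)⁻¹‖)·(‖k‖ + √N·ε̃) + ‖(K + λI)⁻¹‖·√N·ε̃. -/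
open Matrix MeasureTheory

/-- The constant `C = (1/λ + ‖(K+λI)⁻¹‖)(‖k‖ + √N ε̃) + ‖(K+λI)⁻¹‖ √N ε̃`. -/
noncomputable def Cbound {N : ℕ} (K : Matrix (Fin N) (Fin N) ℝ) (k : Fin N → ℝ)
    (lam ε : ℝ) : ℝ :=
  (1 / lam + opNorm (K + lam • 1)⁻¹) * (evnorm k + Real.sqrt N * ε) +
    opNorm (K + lam • 1)⁻¹ * (Real.sqrt N * ε)

/-- The constant `S² = ε̃ + √N ε̃ ‖(K+λI)⁻¹ k‖ + (√N ε̃ + ‖k‖) C`. -/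
noncomputable def Ssq {N : ℕ} (K : Matrix (Fin N) (Fin N) ℝ) (k : Fin N → ℝ)
    (lam ε : ℝ) : ℝ :=
  ε + Real.sqrt N * ε * evnorm ((K + lam • 1)⁻¹ *ᵥ k) +
    (Real.sqrt N * ε + evnorm k) * Cbound K k lam ε

/-!
Write `a = (K + λI)⁻¹ k` and `b = (K̃ + λI)⁻¹ k̃`. Then
`σ² - σ̃² = (c - c̃) + (k̃ - k) ⬝ a - k̃ ⬝ (a - b)`, and each term is bounded by Cauchy–Schwarz,
using `‖k̃ - k‖ ≤ √N ε̃` and `‖a - b‖ ≤ ‖a‖ + ‖b‖ ≤ C`. The only estimate not read off the data is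
`‖(K̃ + λI)⁻¹‖ ≤ 1/λ`, which follows from `λ ‖v‖² ≤ v ⬝ (K̃ + λI) v ≤ ‖v‖ ‖(K̃ + λI) v‖`.
-/

section EuclideanNorm

variable {N : ℕ}

lemma evnorm_eq_norm_toLp (v : Fin N → ℝ) : evnorm v = ‖WithLp.toLp 2 v‖ := by
  simp [evnorm, EuclideanSpace.norm_eq, Real.norm_eq_abs, sq_abs]

lemma evnorm_nonneg (v : Fin N → ℝ) : 0 ≤ evnorm v := Real.sqrt_nonneg _

lemma dotProduct_self_eq_evnorm_sq (v : Fin N → ℝ) : v ⬝ᵥ v = evnorm v ^ 2 := by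
  rw [evnorm, Real.sq_sqrt (Finset.sum_nonneg fun i _ => sq_nonneg _)]
  simp only [dotProduct, sq]

lemma abs_dotProduct_le (v w : Fin N → ℝ) : |v ⬝ᵥ w| ≤ evnorm v * evnorm w := by
  rw [evnorm_eq_norm_toLp, evnorm_eq_norm_toLp, dotProduct_comm, ← star_trivial v,
    ← EuclideanSpace.inner_toLp_toLp]
  exact abs_real_inner_le_norm _ _

lemma evnorm_add_le (v w : Fin N → ℝ) : evnorm (v + w) ≤ evnorm v + evnorm w := by
  simpa only [evnorm_eq_norm_toLp, WithLp.toLp_add] using norm_add_le _ _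

lemma evnorm_sub_le (v w : Fin N → ℝ) : evnorm (v - w) ≤ evnorm v + evnorm w := by
  simpa only [evnorm_eq_norm_toLp, WithLp.toLp_sub] using norm_sub_le _ _

lemma evnorm_le_sqrt_card_mul {v : Fin N → ℝ} {ε : ℝ} (hε : 0 ≤ ε) (hv : ∀ i, |v i| ≤ ε) :
    evnorm v ≤ Real.sqrt N * ε := by
  have hsum : ∑ i, v i ^ 2 ≤ N * ε ^ 2 := by
    calc ∑ i, v i ^ 2 ≤ ∑ _i : Fin N, ε ^ 2 :=
          Finset.sum_le_sum fun i _ => sq_le_sq' (abs_le.mp (hv i)).1 (abs_le.mp (hv i)).2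
      _ = N * ε ^ 2 := by simp
  calc evnorm v ≤ Real.sqrt (N * ε ^ 2) := Real.sqrt_le_sqrt hsum
    _ = Real.sqrt N * ε := by rw [Real.sqrt_mul (Nat.cast_nonneg N), Real.sqrt_sq hε]

lemma evnorm_mulVec_le (M : Matrix (Fin N) (Fin N) ℝ) (v : Fin N → ℝ) :
    evnorm (M *ᵥ v) ≤ opNorm M * evnorm v := by
  simpa only [opNorm, evnorm_eq_norm_toLp, toEuclideanCLM_toLp] using
    (toEuclideanCLM (𝕜 := ℝ) M).le_opNorm (WithLp.toLp 2 v)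

lemma opNorm_nonneg (M : Matrix (Fin N) (Fin N) ℝ) : 0 ≤ opNorm M := norm_nonneg _

lemma opNorm_le_of_evnorm_mulVec_le {M : Matrix (Fin N) (Fin N) ℝ} {C : ℝ} (hC : 0 ≤ C)
    (hM : ∀ v, evnorm (M *ᵥ v) ≤ C * evnorm v) : opNorm M ≤ C :=
  ContinuousLinearMap.opNorm_le_bound _ hC fun x => by
    simpa only [evnorm_eq_norm_toLp, ← toEuclideanCLM_toLp, WithLp.toLp_ofLp] using
      hM (WithLp.ofLp x)

end EuclideanNorm

section Coercive

variable {N : ℕ} {M : Matrix (Fin N) (Fin N) ℝ} {lam : ℝ}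

lemma le_dotProduct_add_smul_one_mulVec {n : Type*} [Fintype n] [DecidableEq n]
    {K : Matrix n n ℝ} (hK : ∀ v, 0 ≤ v ⬝ᵥ K *ᵥ v) (lam : ℝ) (v : n → ℝ) :
    lam * (v ⬝ᵥ v) ≤ v ⬝ᵥ (K + lam • 1) *ᵥ v := by
  rw [add_mulVec, smul_mulVec, one_mulVec, dotProduct_add, dotProduct_smul, smul_eq_mul]
  linarith [hK v]

lemma mul_evnorm_le_evnorm_mulVec (hM : ∀ v, lam * (v ⬝ᵥ v) ≤ v ⬝ᵥ M *ᵥ v)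
    (v : Fin N → ℝ) : lam * evnorm v ≤ evnorm (M *ᵥ v) := by
  have h : evnorm v * (lam * evnorm v) ≤ evnorm v * evnorm (M *ᵥ v) := by
    calc evnorm v * (lam * evnorm v) = lam * (v ⬝ᵥ v) := by
          rw [dotProduct_self_eq_evnorm_sq]; ring
      _ ≤ v ⬝ᵥ M *ᵥ v := hM v
      _ ≤ evnorm v * evnorm (M *ᵥ v) := (le_abs_self _).trans (abs_dotProduct_le _ _)
  rcases (evnorm_nonneg v).eq_or_lt with h0 | hpos
  · rw [← h0, mul_zero]; exact evnorm_nonneg _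
  · exact le_of_mul_le_mul_left h hpos

lemma isUnit_of_coercive (hlam : 0 < lam) (hM : ∀ v, lam * (v ⬝ᵥ v) ≤ v ⬝ᵥ M *ᵥ v) :
    IsUnit M := by
  refine mulVec_injective_iff_isUnit.mp fun v w hvw => ?_
  have hzero : M *ᵥ (v - w) = 0 := by rw [mulVec_sub, hvw, sub_self]
  have h := hM (v - w)
  rw [hzero, dotProduct_zero] at h
  have hself : (v - w) ⬝ᵥ (v - w) = 0 :=
    le_antisymm (nonpos_of_mul_nonpos_right h hlam) (dotProduct_self_star_nonneg _)
  exact sub_eq_zero.mp (dotProduct_self_eq_zero.mp hself)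

lemma opNorm_inv_le_of_coercive (hlam : 0 < lam) (hM : ∀ v, lam * (v ⬝ᵥ v) ≤ v ⬝ᵥ M *ᵥ v) :
    opNorm M⁻¹ ≤ 1 / lam := by
  refine opNorm_le_of_evnorm_mulVec_le (by positivity) fun v => ?_
  have h := mul_evnorm_le_evnorm_mulVec hM (M⁻¹ *ᵥ v)
  rw [mulVec_mulVec, mul_nonsing_inv _ ((isUnit_of_coercive hlam hM).map detMonoidHom),
    one_mulVec] at h
  rw [div_mul_eq_mul_div, one_mul, le_div_iff₀ hlam, mul_comm]
  exact h

end Coercive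

lemma opNorm_mul_add_le_Cbound {N : ℕ} (K : Matrix (Fin N) (Fin N) ℝ) (k : Fin N → ℝ)
    {lam ε : ℝ} (hε : 0 ≤ ε) :
    opNorm (K + lam • 1)⁻¹ * evnorm k + 1 / lam * (evnorm k + Real.sqrt N * ε) ≤
      Cbound K k lam ε := by
  have h := mul_nonneg (opNorm_nonneg (K + lam • 1)⁻¹) (mul_nonneg (Real.sqrt_nonneg N) hε)
  rw [Cbound]
  linarith

theorem stmt_7_general {N : ℕ} (K Kt : Matrix (Fin N) (Fin N) ℝ)
    (hKtpsd : ∀ v : Fin N → ℝ, 0 ≤ v ⬝ᵥ Kt *ᵥ v)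
    (lam : ℝ) (hlam : 0 < lam) (ε : ℝ) (hε : 0 ≤ ε)
    (k kt : Fin N → ℝ) (hk : ∀ i, |kt i - k i| ≤ ε)
    (c ct : ℝ) (hc : |c - ct| ≤ ε) :
    |(c - k ⬝ᵥ ((K + lam • 1)⁻¹ *ᵥ k)) - (ct - kt ⬝ᵥ ((Kt + lam • 1)⁻¹ *ᵥ kt))| ≤
      Ssq K k lam ε := by
  set a := (K + lam • 1)⁻¹ *ᵥ k
  set b := (Kt + lam • 1)⁻¹ *ᵥ kt
  have hsN : 0 ≤ Real.sqrt N * ε := by positivity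
  have hd : evnorm (kt - k) ≤ Real.sqrt N * ε := evnorm_le_sqrt_card_mul hε hk
  have hkt : evnorm kt ≤ evnorm k + Real.sqrt N * ε := by
    simpa only [add_sub_cancel] using (evnorm_add_le k (kt - k)).trans (by linarith)
  have hb : evnorm b ≤ 1 / lam * (evnorm k + Real.sqrt N * ε) :=
    (evnorm_mulVec_le _ kt).trans <| mul_le_mul
      (opNorm_inv_le_of_coercive hlam (le_dotProduct_add_smul_one_mulVec hKtpsd lam))
      hkt (evnorm_nonneg kt) (by positivity)
  have hab : evnorm (a - b) ≤ Cbound K k lam ε :=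
    (evnorm_sub_le a b).trans <| (add_le_add (evnorm_mulVec_le _ k) hb).trans
      (opNorm_mul_add_le_Cbound K k hε)
  have hsplit : (c - k ⬝ᵥ a) - (ct - kt ⬝ᵥ b) = (c - ct) + (kt - k) ⬝ᵥ a - kt ⬝ᵥ (a - b) := by
    simp only [sub_dotProduct, dotProduct_sub]; ring
  rw [hsplit]
  calc _ ≤ |c - ct| + |(kt - k) ⬝ᵥ a| + |kt ⬝ᵥ (a - b)| :=
        (abs_sub _ _).trans (add_le_add_left (abs_add_le _ _) _)
    _ ≤ ε + Real.sqrt N * ε * evnorm a + (Real.sqrt N * ε + evnorm k) * Cbound K k lam ε := by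
      gcongr
      · exact (abs_dotProduct_le _ _).trans
          (mul_le_mul_of_nonneg_right hd (evnorm_nonneg a))
      · exact (abs_dotProduct_le _ _).trans <| mul_le_mul (by linarith) hab
          (evnorm_nonneg _) (add_nonneg hsN (evnorm_nonneg k))

theorem stmt_7 {N : ℕ} (hN : 0 < N) (K Kt : Matrix (Fin N) (Fin N) ℝ)
    (hKsymm : K.IsSymm) (hKtsymm : Kt.IsSymm)
    (hKpsd : ∀ v : Fin N → ℝ, 0 ≤ v ⬝ᵥ K *ᵥ v)
    (hKtpsd : ∀ v : Fin N → ℝ, 0 ≤ v ⬝ᵥ Kt *ᵥ v)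
    (lam : ℝ) (hlam : 0 < lam) (ε : ℝ) (hε : 0 ≤ ε)
    (k kt : Fin N → ℝ) (hk : ∀ i, |kt i - k i| ≤ ε)
    (c ct : ℝ) (hc : |c - ct| ≤ ε) :
    |(c - k ⬝ᵥ ((K + lam • 1)⁻¹ *ᵥ k)) - (ct - kt ⬝ᵥ ((Kt + lam • 1)⁻¹ *ᵥ kt))| ≤
      Ssq K k lam ε :=
  stmt_7_general K Kt hKtpsd lam hlam ε hε k kt hk c ct hc
end
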